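/- arXiv:2205.11936 — 2 statements merged into one kernel-verified Lean document; each statement's English description precedes it below -/
import Mathlib

section
/- Interior regularity across a sign-change point, strong form of Theorem 3.3(h). Let ψ(s) = s/√(1+s²), let c ∈ (a,b), let f : (a,b) × ℝ → ℝ, and let u ∈ W^{1,1}(a,b) be differentiable on (a,b)∖{c} with u' locally absolutely continuous on (a,c) and on (c,b). Suppose there is an absolutely continuous function w on [a,b] with derivative w' ∈ L¹(a,b) such that w(x) = ψ(u'(x)) for every x ∈ (a,b)∖{c} and w'(x) = −f(x, u(x)) for almost every x ∈ (a,b). Assume f(x, u(x)) ≥ 0 for almost every x ∈ (a,c) and f(x, u(x)) ≤ 0 for almost every x ∈ (c,b). Assume further that either (left condition) there exist δ > 0 and μ ∈ L¹(c−δ, c) with f(x, u(x)) ≤ μ(x) for almost every x ∈ (c−δ, c), M(x) := ∫ₓ^c μ(t) dt > 0 for all x ∈ [c−δ, c), and ∫_{c−δ}^c dx/√(M(x)) = +∞; or (right condition) there exist δ > 0 and ν ∈ L¹(c, c+δ) with f(x, u(x)) ≥ ν(x) for almost every x ∈ (c, c+δ), N(x) := ∫_c^x ν(t) dt < 0 for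 all x ∈ (c, c+δ], and ∫_c^{c+δ} dx/√(−N(x)) = +∞. Then |w(c)| < 1, u is continuously differentiable on all of (a,b) with u' locally absolutely continuous on (a,b), and −(u'(x)/√(1+u'(x)²))' = f(x, u(x)) for almost every x ∈ (a,b). -/
open Set Filter MeasureTheory Topology

/-! The flux `w` is absolutely continuous with `w' = -f(·, u) ≤ 0` on `(a, c)`, so
`w c ≤ w x < 1` for `x < c`, and `-1 ≤ w c` by continuity. If `w c = -1`, integrating
`w' ≥ -μ` (resp. `w' ≤ -ν`) gives `1 + w ≤ M` (resp. `1 + w ≤ -N`) near `c`; since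
`1 - w² ≤ 2 (1 + w)` this becomes `1 / √M ≤ 2√2 |ψ⁻¹ w| = 2√2 |u'|`, so the decay integral
would be finite. Hence `|w| < 1` on all of `(a, b)`, and `ψ⁻¹ ∘ w`, with `ψ⁻¹ t = t / √(1 - t²)`,
is continuous and agrees with `u'` off `c`, so it is the derivative of `u` everywhere. It is
locally absolutely continuous as a locally Lipschitz function of the absolutely continuous `w`.
-/

theorem abs_div_sqrt_one_add_sq_lt_one (s : ℝ) : |s / √(1 + s ^ 2)| < 1 := by
  have hpos : 0 < √(1 + s ^ 2) := by positivity
  rw [abs_div, abs_of_pos hpos, div_lt_one hpos, ← Real.sqrt_sq_eq_abs]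
  exact Real.sqrt_lt_sqrt (sq_nonneg s) (lt_one_add _)

theorem div_sqrt_one_sub_sq_div_sqrt_one_add_sq (s : ℝ) :
    s / √(1 + s ^ 2) / √(1 - (s / √(1 + s ^ 2)) ^ 2) = s := by
  have hpos : 0 < √(1 + s ^ 2) := by positivity
  have hsq : √(1 + s ^ 2) ^ 2 = 1 + s ^ 2 := Real.sq_sqrt (by positivity)
  have h : 1 - (s / √(1 + s ^ 2)) ^ 2 = (1 / √(1 + s ^ 2)) ^ 2 := by
    field_simp
    rw [hsq]
    ring
  rw [h, Real.sqrt_sq (by positivity)]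
  field_simp

theorem contDiffOn_div_sqrt_one_sub_sq :
    ContDiffOn ℝ 1 (fun t : ℝ => t / √(1 - t ^ 2)) (Ioo (-1) 1) := by
  have hpos : ∀ t ∈ Ioo (-1 : ℝ) 1, 0 < 1 - t ^ 2 := fun t ht => by
    nlinarith [ht.1, ht.2]
  exact contDiffOn_id.div (ContDiffOn.sqrt (by fun_prop) fun t ht => (hpos t ht).ne')
    fun t ht => (Real.sqrt_pos.2 (hpos t ht)).ne'

theorem one_div_sqrt_le_of_one_add_le {W M : ℝ} (hW : |W| < 1) (hW_half : W ≤ -(1 / 2))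
    (hWM : 1 + W ≤ M) : 1 / √M ≤ 2 * √2 * |W / √(1 - W ^ 2)| := by
  have hW_sq : 0 < 1 - W ^ 2 := by nlinarith [abs_lt.1 hW]
  have hroot_pos : 0 < √(1 - W ^ 2) := Real.sqrt_pos.2 hW_sq
  have hM_pos : 0 < √M := Real.sqrt_pos.2 (by linarith [(abs_lt.1 hW).1])
  -- `1 - W² = (1 - W)(1 + W) ≤ 2M`
  have hroot_le : √(1 - W ^ 2) ≤ √2 * √M := by
    rw [← Real.sqrt_mul zero_le_two]
    exact Real.sqrt_le_sqrt (by nlinarith [(abs_lt.1 hW).1])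
  have habs : 1 / 2 ≤ |W| := by rw [abs_of_neg (by linarith)]; linarith
  rw [abs_div, abs_of_pos hroot_pos]
  calc 1 / √M = 2 * √2 * (1 / 2 / (√2 * √M)) := by field_simp
    _ ≤ 2 * √2 * (|W| / √(1 - W ^ 2)) := by gcongr

theorem AbsolutelyContinuousOnInterval.congr {X : Type*} [PseudoMetricSpace X] {f g : ℝ → X}
    {a b : ℝ} (hf : AbsolutelyContinuousOnInterval f a b) (hfg : EqOn f g (uIcc a b)) :
    AbsolutelyContinuousOnInterval g a b := by
  unfold AbsolutelyContinuousOnInterval at hf ⊢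
  refine hf.congr' ?_
  filter_upwards [mem_inf_of_right
    (mem_principal_self (AbsolutelyContinuousOnInterval.disjWithin a b))] with E hE
  exact Finset.sum_congr rfl fun i hi => by rw [hfg (hE.1 i hi).1, hfg (hE.1 i hi).2]

theorem LipschitzOnWith.comp_absolutelyContinuousOnInterval {X Y : Type*} [PseudoMetricSpace X]
    [PseudoMetricSpace Y] {g : X → Y} {K : NNReal} {s : Set X} {f : ℝ → X} {a b : ℝ}
    (hg : LipschitzOnWith K g s) (hf : AbsolutelyContinuousOnInterval f a b)
    (hfs : MapsTo f (uIcc a b) s) : AbsolutelyContinuousOnInterval (g ∘ f) a b := by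
  unfold AbsolutelyContinuousOnInterval at hf ⊢
  have hKf := hf.const_mul (K : ℝ)
  rw [mul_zero] at hKf
  refine squeeze_zero' (Eventually.of_forall fun E => Finset.sum_nonneg fun i _ => dist_nonneg)
    ?_ hKf
  filter_upwards [mem_inf_of_right
    (mem_principal_self (AbsolutelyContinuousOnInterval.disjWithin a b))] with E hE
  rw [Finset.mul_sum]
  exact Finset.sum_le_sum fun i hi => hg.dist_le_mul _ (hfs (hE.1 i hi).1) _ (hfs (hE.1 i hi).2)

theorem LocallyLipschitzOn.comp_absolutelyContinuousOnInterval {E Y : Type*}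
    [SeminormedAddCommGroup E] [PseudoMetricSpace Y] {g : E → Y} {s : Set E} {f : ℝ → E} {a b : ℝ}
    (hg : LocallyLipschitzOn s g) (hf : AbsolutelyContinuousOnInterval f a b)
    (hfs : MapsTo f (uIcc a b) s) : AbsolutelyContinuousOnInterval (g ∘ f) a b := by
  obtain ⟨K, hK⟩ := (hg.mono hfs.image_subset).exists_lipschitzOnWith_of_compact
    (isCompact_uIcc.image_of_continuousOn hf.continuousOn)
  exact hK.comp_absolutelyContinuousOnInterval hf (mapsTo_image f _)

theorem AbsolutelyContinuousOnInterval.eq_add_integral_deriv {f : ℝ → ℝ} {a b x : ℝ}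
    (hf : AbsolutelyContinuousOnInterval f a b) (hx : x ∈ uIcc a b) :
    f x = f a + ∫ t in a..x, deriv f t := by
  rw [(hf.mono (uIcc_subset_uIcc_left hx)).integral_deriv_eq_sub]
  ring

theorem ContinuousOn.integrableOn_Ioo_of_integrableOn_Ioo_right {E : Type*} [NormedAddCommGroup E]
    {f : ℝ → E} {p q r : ℝ} (hf : ContinuousOn f (Ico p q)) (hrq : r < q)
    (hfr : IntegrableOn f (Ioo r q)) : IntegrableOn f (Ioo p q) := by
  refine ((hf.mono (Icc_subset_Ico_right hrq)).integrableOn_compact isCompact_Icc).union hfr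
    |>.mono_set fun t ht => ?_
  rcases le_or_gt t r with htr | htr
  exacts [Or.inl ⟨ht.1.le, htr⟩, Or.inr ⟨htr, ht.2⟩]

theorem ContinuousOn.integrableOn_Ioo_of_integrableOn_Ioo_left {E : Type*} [NormedAddCommGroup E]
    {f : ℝ → E} {p q r : ℝ} (hf : ContinuousOn f (Ioc p q)) (hpr : p < r)
    (hfr : IntegrableOn f (Ioo p r)) : IntegrableOn f (Ioo p q) := by
  refine hfr.union ((hf.mono (Icc_subset_Ioc_left hpr)).integrableOn_compact isCompact_Icc)
    |>.mono_set fun t ht => ?_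
  rcases lt_or_ge t r with htr | htr
  exacts [Or.inl ⟨ht.1, htr⟩, Or.inr ⟨htr, ht.2.le⟩]

theorem intervalIntegral.integral_mono_of_ae_Ioo {f g : ℝ → ℝ} {x y : ℝ} (hxy : x ≤ y)
    (hf : IntervalIntegrable f volume x y) (hg : IntervalIntegrable g volume x y)
    (h : ∀ᵐ t, t ∈ Ioo x y → f t ≤ g t) : ∫ t in x..y, f t ≤ ∫ t in x..y, g t := by
  refine intervalIntegral.integral_mono_ae_restrict hxy hf hg ?_
  rwa [EventuallyLE, ← Measure.restrict_congr_set Ioo_ae_eq_Icc, ae_restrict_iff' measurableSet_Ioo]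

section Primitive

variable {a b : ℝ} {F F' : ℝ → ℝ}

theorem MeasureTheory.IntegrableOn.intervalIntegrable_of_mem_Icc
    (hF' : IntegrableOn F' (Ioo a b)) {x y : ℝ} (hx : x ∈ Icc a b) (hy : y ∈ Icc a b) :
    IntervalIntegrable F' volume x y :=
  (IntegrableOn.mono_set (by rwa [integrableOn_Icc_iff_integrableOn_Ioo])
    (uIcc_subset_Icc hx hy)).intervalIntegrable

variable (hF' : IntegrableOn F' (Ioo a b)) (hF : ∀ x ∈ Icc a b, F x = F a + ∫ t in a..x, F' t)
include hF' hF

theorem sub_eq_integral_of_eq_add_integral {x y : ℝ} (hx : x ∈ Icc a b) (hy : y ∈ Icc a b) :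
    F y - F x = ∫ t in x..y, F' t := by
  have ha : a ∈ Icc a b := ⟨le_rfl, hx.1.trans hx.2⟩
  rw [hF y hy, hF x hx, ← intervalIntegral.integral_interval_sub_left
    (hF'.intervalIntegrable_of_mem_Icc ha hy) (hF'.intervalIntegrable_of_mem_Icc ha hx)]
  ring

theorem absolutelyContinuousOnInterval_of_eq_add_integral {x y : ℝ} (hx : x ∈ Icc a b)
    (hy : y ∈ Icc a b) : AbsolutelyContinuousOnInterval F x y := by
  have hconst := ((LipschitzWith.const (F x)).lipschitzOnWith (s := uIcc x y))
  refine (hconst.absolutelyContinuousOnInterval.add ((hF'.intervalIntegrable_of_mem_Icc hx hy)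
    |>.absolutelyContinuousOnInterval_intervalIntegral left_mem_uIcc)).congr fun z hz => ?_
  have hz' : z ∈ Icc a b := uIcc_subset_Icc hx hy hz
  simp only [Pi.add_apply, ← sub_eq_integral_of_eq_add_integral hF' hF hx hz']
  ring

theorem continuousOn_of_eq_add_integral : ContinuousOn F (Icc a b) := fun x hx =>
  ((absolutelyContinuousOnInterval_of_eq_add_integral hF' hF (left_mem_Icc.2 (hx.1.trans hx.2))
    (right_mem_Icc.2 (hx.1.trans hx.2))).continuousOn x (Icc_subset_uIcc hx)).mono Icc_subset_uIcc

theorem ae_hasDerivAt_of_eq_add_integral : ∀ᵐ x, x ∈ Ioo a b → HasDerivAt F (F' x) x := by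
  rcases le_or_gt a b with hab | hba
  · filter_upwards [(hF'.intervalIntegrable_of_mem_Icc (left_mem_Icc.2 hab)
      (right_mem_Icc.2 hab)).ae_hasDerivAt_integral] with x hx hxab
    refine ((hx (Icc_subset_uIcc (Ioo_subset_Icc_self hxab)) a left_mem_uIcc).const_add (F a))
      |>.congr_of_eventuallyEq ?_
    filter_upwards [Icc_mem_nhds hxab.1 hxab.2] with y hy using hF y hy
  · exact ae_of_all _ fun x hx => absurd (hx.1.trans hx.2) hba.not_gt

theorem hasDerivAt_of_eq_add_integral_of_ae_eq {φ : ℝ → ℝ} (hφ : ContinuousOn φ (Ioo a b))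
    (hF'φ : ∀ᵐ t, t ∈ Ioo a b → F' t = φ t) {x : ℝ} (hx : x ∈ Ioo a b) :
    HasDerivAt F (φ x) x := by
  have hderiv : HasDerivAt (fun y => F x + ∫ t in x..y, φ t) (φ x) x :=
    (intervalIntegral.integral_hasDerivAt_right IntervalIntegrable.refl
      (hφ.stronglyMeasurableAtFilter isOpen_Ioo x hx)
      (hφ.continuousAt (isOpen_Ioo.mem_nhds hx))).const_add _
  refine hderiv.congr_of_eventuallyEq ?_
  filter_upwards [Ioo_mem_nhds hx.1 hx.2] with y hy
  rw [← sub_eq_iff_eq_add', sub_eq_integral_of_eq_add_integral hF' hF (Ioo_subset_Icc_self hx)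
    (Ioo_subset_Icc_self hy)]
  refine intervalIntegral.integral_congr_ae ?_
  filter_upwards [hF'φ] with t ht htxy
  exact ht (ordConnected_Ioo.uIcc_subset hx hy (uIoc_subset_uIcc htxy))

theorem le_of_eq_add_integral_of_ae_nonpos {x y : ℝ} (hx : x ∈ Icc a b) (hy : y ∈ Icc a b)
    (hxy : x ≤ y) (hF'_nonpos : ∀ᵐ t, t ∈ Ioo x y → F' t ≤ 0) : F y ≤ F x := by
  rw [← sub_nonpos, sub_eq_integral_of_eq_add_integral hF' hF hx hy,
    ← intervalIntegral.integral_zero]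
  exact intervalIntegral.integral_mono_of_ae_Ioo hxy (hF'.intervalIntegrable_of_mem_Icc hx hy)
    intervalIntegrable_const hF'_nonpos

theorem exists_integrableOn_comp_eq_add_integral {g : ℝ → ℝ} {s : Set ℝ}
    (hg : LocallyLipschitzOn s g) {x y : ℝ} (hx : x ∈ Icc a b) (hy : y ∈ Icc a b) (hxy : x ≤ y)
    (hFs : MapsTo F (Icc x y) s) :
    ∃ V : ℝ → ℝ, IntegrableOn V (Icc x y) ∧
      ∀ z ∈ Icc x y, g (F z) = g (F x) + ∫ t in x..z, V t := by
  have hgF := hg.comp_absolutelyContinuousOnInterval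
    (absolutelyContinuousOnInterval_of_eq_add_integral hF' hF hx hy) (by rwa [uIcc_of_le hxy])
  exact ⟨deriv (g ∘ F), (intervalIntegrable_iff_integrableOn_Icc_of_le hxy).1
    hgF.intervalIntegrable_deriv, fun z hz => hgF.eq_add_integral_deriv (Icc_subset_uIcc hz)⟩

end Primitive

theorem integrableOn_one_div_sqrt_of_one_add_le {s : Set ℝ} {w M : ℝ → ℝ} (hs : MeasurableSet s)
    (hφ : IntegrableOn (fun x => w x / √(1 - w x ^ 2)) s) (hM : ContinuousOn M s)
    (hw : ∀ x ∈ s, |w x| < 1) (hw_half : ∀ x ∈ s, w x ≤ -(1 / 2))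
    (hwM : ∀ x ∈ s, 1 + w x ≤ M x) : IntegrableOn (fun x => 1 / √(M x)) s := by
  have hM_pos : ∀ x ∈ s, 0 < √(M x) := fun x hx =>
    Real.sqrt_pos.2 (by linarith [hwM x hx, (abs_lt.1 (hw x hx)).1])
  refine Integrable.mono' (hφ.norm.const_mul (2 * √2))
    ((continuousOn_const.div hM.sqrt fun x hx => (hM_pos x hx).ne').aestronglyMeasurable hs) ?_
  rw [ae_restrict_iff' hs]
  refine ae_of_all _ fun x hx => ?_
  rw [Real.norm_of_nonneg (one_div_nonneg.2 (hM_pos x hx).le), Real.norm_eq_abs]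
  exact one_div_sqrt_le_of_one_add_le (hw x hx) (hw_half x hx) (hwM x hx)

theorem ne_neg_one_of_not_integrableOn_left {p c : ℝ} {w w' μ : ℝ → ℝ} (hpc : p < c)
    (hw_cont : ContinuousAt w c) (hw : ∀ x ∈ Ioo p c, |w x| < 1)
    (hφ : IntegrableOn (fun x => w x / √(1 - w x ^ 2)) (Ioo p c))
    (hw' : IntegrableOn w' (Ioo p c)) (hw_sub : ∀ x ∈ Ioo p c, w c - w x = ∫ t in x..c, w' t)
    (hμ : IntegrableOn μ (Ioo p c)) (hw'μ : ∀ᵐ t, t ∈ Ioo p c → -μ t ≤ w' t)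
    (hM : ∀ x ∈ Ico p c, 0 < ∫ t in x..c, μ t)
    (hM_not : ¬ IntegrableOn (fun x => 1 / √(∫ t in x..c, μ t)) (Ioo p c)) : w c ≠ -1 := by
  intro hwc
  have hM_cont : ContinuousOn (fun x => ∫ t in x..c, μ t) (Icc p c) := by
    rw [← uIcc_of_le hpc.le]
    exact intervalIntegral.continuousOn_primitive_interval_left
      (by rwa [uIcc_of_le hpc.le, integrableOn_Icc_iff_integrableOn_Ioo])
  obtain ⟨r, hr, hr_half⟩ : ∃ r ∈ Ico p c, Ioo r c ⊆ {x | w x ≤ -(1 / 2)} :=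
    (mem_nhdsLT_iff_exists_mem_Ico_Ioo_subset hpc).1 <| nhdsWithin_le_nhds <|
      hw_cont.eventually (Iic_mem_nhds (by linarith))
  have hsub : Ioo r c ⊆ Ioo p c := Ioo_subset_Ioo_left hr.1
  refine hM_not (ContinuousOn.integrableOn_Ioo_of_integrableOn_Ioo_right ?_ hr.2 ?_)
  · exact continuousOn_const.div (hM_cont.mono Ico_subset_Icc_self).sqrt
      fun x hx => (Real.sqrt_pos.2 (hM x hx)).ne'
  refine integrableOn_one_div_sqrt_of_one_add_le measurableSet_Ioo (hφ.mono_set hsub)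
    (hM_cont.mono (hsub.trans Ioo_subset_Icc_self)) (fun x hx => hw x (hsub hx)) hr_half
    fun x hx => ?_
  have hx_mem : x ∈ Icc p c := Ioo_subset_Icc_self (hsub hx)
  have hc_mem : c ∈ Icc p c := right_mem_Icc.2 hpc.le
  have hflux : -∫ t in x..c, μ t ≤ ∫ t in x..c, w' t := by
    rw [← intervalIntegral.integral_neg]
    refine intervalIntegral.integral_mono_of_ae_Ioo hx.2.le
      (hμ.intervalIntegrable_of_mem_Icc hx_mem hc_mem).neg
      (hw'.intervalIntegrable_of_mem_Icc hx_mem hc_mem) ?_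
    filter_upwards [hw'μ] with t ht htx using ht ⟨hx_mem.1.trans_lt htx.1, htx.2⟩
  linarith [hw_sub x (hsub hx)]

theorem ne_neg_one_of_not_integrableOn_right {c q : ℝ} {w w' ν : ℝ → ℝ} (hcq : c < q)
    (hw_cont : ContinuousAt w c) (hw : ∀ x ∈ Ioo c q, |w x| < 1)
    (hφ : IntegrableOn (fun x => w x / √(1 - w x ^ 2)) (Ioo c q))
    (hw' : IntegrableOn w' (Ioo c q)) (hw_sub : ∀ x ∈ Ioo c q, w x - w c = ∫ t in c..x, w' t)
    (hν : IntegrableOn ν (Ioo c q)) (hw'ν : ∀ᵐ t, t ∈ Ioo c q → w' t ≤ -ν t)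
    (hN : ∀ x ∈ Ioc c q, ∫ t in c..x, ν t < 0)
    (hN_not : ¬ IntegrableOn (fun x => 1 / √(-∫ t in c..x, ν t)) (Ioo c q)) : w c ≠ -1 := by
  intro hwc
  have hN_cont : ContinuousOn (fun x => -∫ t in c..x, ν t) (Icc c q) := by
    rw [← uIcc_of_le hcq.le]
    exact (intervalIntegral.continuousOn_primitive_interval
      (by rwa [uIcc_of_le hcq.le, integrableOn_Icc_iff_integrableOn_Ioo])).neg
  obtain ⟨r, hr, hr_half⟩ : ∃ r ∈ Ioc c q, Ioo c r ⊆ {x | w x ≤ -(1 / 2)} :=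
    (mem_nhdsGT_iff_exists_mem_Ioc_Ioo_subset hcq).1 <| nhdsWithin_le_nhds <|
      hw_cont.eventually (Iic_mem_nhds (by linarith))
  have hsub : Ioo c r ⊆ Ioo c q := Ioo_subset_Ioo_right hr.2
  refine hN_not (ContinuousOn.integrableOn_Ioo_of_integrableOn_Ioo_left ?_ hr.1 ?_)
  · exact continuousOn_const.div (hN_cont.mono Ioc_subset_Icc_self).sqrt
      fun x hx => (Real.sqrt_pos.2 (neg_pos.2 (hN x hx))).ne'
  refine integrableOn_one_div_sqrt_of_one_add_le measurableSet_Ioo (hφ.mono_set hsub)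
    (hN_cont.mono (hsub.trans Ioo_subset_Icc_self)) (fun x hx => hw x (hsub hx)) hr_half
    fun x hx => ?_
  have hx_mem : x ∈ Icc c q := Ioo_subset_Icc_self (hsub hx)
  have hc_mem : c ∈ Icc c q := left_mem_Icc.2 hcq.le
  have hflux : ∫ t in c..x, w' t ≤ -∫ t in c..x, ν t := by
    rw [← intervalIntegral.integral_neg]
    refine intervalIntegral.integral_mono_of_ae_Ioo hx.1.le
      (hw'.intervalIntegrable_of_mem_Icc hc_mem hx_mem)
      (hν.intervalIntegrable_of_mem_Icc hc_mem hx_mem).neg ?_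
    filter_upwards [hw'ν] with t ht htx using ht ⟨htx.1, htx.2.trans_le hx_mem.2⟩
  linarith [hw_sub x (hsub hx)]

theorem abs_flux_lt_one_of_decay {a b c : ℝ} {w w' g : ℝ → ℝ} (hc : c ∈ Ioo a b)
    (hw'_int : IntegrableOn w' (Ioo a b)) (hw_ftc : ∀ x ∈ Icc a b, w x = w a + ∫ t in a..x, w' t)
    (hw_off : ∀ x ∈ Ioo a b, x ≠ c → |w x| < 1)
    (hφ_int : IntegrableOn (fun x => w x / √(1 - w x ^ 2)) (Ioo a b))
    (hw' : ∀ᵐ x, x ∈ Ioo a b → w' x = -g x) (hg : ∀ᵐ x, x ∈ Ioo a c → 0 ≤ g x)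
    (hdecay :
      (∃ δ > (0 : ℝ), a ≤ c - δ ∧ ∃ μ : ℝ → ℝ,
        IntegrableOn μ (Ioo (c - δ) c) ∧
        (∀ᵐ x, x ∈ Ioo (c - δ) c → g x ≤ μ x) ∧
        (∀ x ∈ Ico (c - δ) c, 0 < ∫ t in x..c, μ t) ∧
        ¬ IntegrableOn (fun x => 1 / √(∫ t in x..c, μ t)) (Ioo (c - δ) c)) ∨
      (∃ δ > (0 : ℝ), c + δ ≤ b ∧ ∃ ν : ℝ → ℝ,
        IntegrableOn ν (Ioo c (c + δ)) ∧
        (∀ᵐ x, x ∈ Ioo c (c + δ) → ν x ≤ g x) ∧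
        (∀ x ∈ Ioc c (c + δ), (∫ t in c..x, ν t) < 0) ∧
        ¬ IntegrableOn (fun x => 1 / √(-(∫ t in c..x, ν t))) (Ioo c (c + δ)))) :
    |w c| < 1 := by
  obtain ⟨hac, hcb⟩ := hc
  have hc_mem : c ∈ Icc a b := ⟨hac.le, hcb.le⟩
  have hwc_cont : ContinuousAt w c :=
    (continuousOn_of_eq_add_integral hw'_int hw_ftc).continuousAt (Icc_mem_nhds hac hcb)
  have hw_sub : ∀ {x y}, x ∈ Icc a b → y ∈ Icc a b → w y - w x = ∫ t in x..y, w' t :=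
    sub_eq_integral_of_eq_add_integral hw'_int hw_ftc
  have hwc_lt : w c < 1 := by
    have hm : (a + c) / 2 ∈ Ioo a c := ⟨by linarith, by linarith⟩
    refine (le_of_eq_add_integral_of_ae_nonpos hw'_int hw_ftc ⟨hm.1.le, by linarith⟩ hc_mem
      hm.2.le ?_).trans_lt (abs_lt.1 (hw_off _ ⟨hm.1, hm.2.trans hcb⟩ hm.2.ne)).2
    filter_upwards [hw', hg] with t hw't hgt ht
    have ht' : t ∈ Ioo a c := ⟨hm.1.trans ht.1, ht.2⟩
    linarith [hw't ⟨ht'.1, ht'.2.trans hcb⟩, hgt ht']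
  have hwc_ge : -1 ≤ w c := by
    refine ge_of_tendsto (hwc_cont.mono_left (nhdsWithin_le_nhds (s := Iio c))) ?_
    filter_upwards [Ioo_mem_nhdsLT hac] with x hx
    exact (abs_lt.1 (hw_off x ⟨hx.1, hx.2.trans hcb⟩ hx.2.ne)).1.le
  have hwc_ne : w c ≠ -1 := by
    rcases hdecay with ⟨δ, hδ, hδa, μ, hμ, hgμ, hM, hM_not⟩ | ⟨δ, hδ, hδb, ν, hν, hgν, hN, hN_not⟩
    · have hsub : Ioo (c - δ) c ⊆ Ioo a b := Ioo_subset_Ioo hδa hcb.le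
      refine ne_neg_one_of_not_integrableOn_left (by linarith) hwc_cont
        (fun x hx => hw_off x (hsub hx) hx.2.ne) (hφ_int.mono_set hsub)
        (hw'_int.mono_set hsub) (fun x hx => hw_sub (Ioo_subset_Icc_self (hsub hx)) hc_mem) hμ
        ?_ hM hM_not
      filter_upwards [hw', hgμ] with t hw't hgt ht
      linarith [hw't (hsub ht), hgt ht]
    · have hsub : Ioo c (c + δ) ⊆ Ioo a b := Ioo_subset_Ioo hac.le hδb
      refine ne_neg_one_of_not_integrableOn_right (by linarith) hwc_cont
        (fun x hx => hw_off x (hsub hx) hx.1.ne') (hφ_int.mono_set hsub)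
        (hw'_int.mono_set hsub) (fun x hx => hw_sub hc_mem (Ioo_subset_Icc_self (hsub hx))) hν
        ?_ hN hN_not
      filter_upwards [hw', hgν] with t hw't hgt ht
      linarith [hw't (hsub ht), hgt ht]
  exact abs_lt.2 ⟨lt_of_le_of_ne hwc_ge hwc_ne.symm, hwc_lt⟩

theorem interior_regularity_sign_change_h_general
    (a b c : ℝ) (hc : c ∈ Ioo a b) (f : ℝ → ℝ → ℝ) (u u' w w' : ℝ → ℝ)
    -- u ∈ W^{1,1}(a,b)
    (hu'_int : IntegrableOn u' (Ioo a b))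
    (hu_ftc : ∀ x ∈ Icc a b, u x = u a + ∫ t in a..x, u' t)
    -- the flux w is absolutely continuous on [a,b] with derivative w' ∈ L¹(a,b)
    (hw'_int : IntegrableOn w' (Ioo a b))
    (hw_ftc : ∀ x ∈ Icc a b, w x = w a + ∫ t in a..x, w' t)
    (hw_eq : ∀ x ∈ Ioo a b, x ≠ c → w x = u' x / Real.sqrt (1 + u' x ^ 2))
    (hw' : ∀ᵐ x ∂volume, x ∈ Ioo a b → w' x = -f x (u x))
    -- sign conditions
    (hsign₁ : ∀ᵐ x ∂volume, x ∈ Ioo a c → 0 ≤ f x (u x))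
    -- integral decay condition on the left or on the right of c
    (hdecay :
      (∃ δ > (0:ℝ), a ≤ c - δ ∧ ∃ μ : ℝ → ℝ,
        IntegrableOn μ (Ioo (c - δ) c) ∧
        (∀ᵐ x ∂volume, x ∈ Ioo (c - δ) c → f x (u x) ≤ μ x) ∧
        (∀ x ∈ Ico (c - δ) c, 0 < ∫ t in x..c, μ t) ∧
        ¬ IntegrableOn (fun x => 1 / Real.sqrt (∫ t in x..c, μ t)) (Ioo (c - δ) c)) ∨
      (∃ δ > (0:ℝ), c + δ ≤ b ∧ ∃ ν : ℝ → ℝ,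
        IntegrableOn ν (Ioo c (c + δ)) ∧
        (∀ᵐ x ∂volume, x ∈ Ioo c (c + δ) → ν x ≤ f x (u x)) ∧
        (∀ x ∈ Ioc c (c + δ), (∫ t in c..x, ν t) < 0) ∧
        ¬ IntegrableOn (fun x => 1 / Real.sqrt (-(∫ t in c..x, ν t))) (Ioo c (c + δ)))) :
    |w c| < 1 ∧
    (∀ x ∈ Ioo a b, HasDerivAt u (w x / Real.sqrt (1 - w x ^ 2)) x) ∧
    ContinuousOn (fun x => w x / Real.sqrt (1 - w x ^ 2)) (Ioo a b) ∧
    (∀ c₁ d₁ : ℝ, a < c₁ → c₁ ≤ d₁ → d₁ < b → ∃ V : ℝ → ℝ,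
      IntegrableOn V (Icc c₁ d₁) ∧ ∀ x ∈ Icc c₁ d₁,
        w x / Real.sqrt (1 - w x ^ 2) = w c₁ / Real.sqrt (1 - w c₁ ^ 2) + ∫ t in c₁..x, V t) ∧
    (∀ᵐ x ∂volume, x ∈ Ioo a b → HasDerivAt w (-f x (u x)) x) := by
  have hw_off : ∀ x ∈ Ioo a b, x ≠ c → |w x| < 1 := fun x hx hxc =>
    hw_eq x hx hxc ▸ abs_div_sqrt_one_add_sq_lt_one _
  have hu'_ae : ∀ᵐ x, x ∈ Ioo a b → u' x = w x / √(1 - w x ^ 2) := by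
    filter_upwards [Measure.ae_ne volume c] with x hxc hx
    rw [hw_eq x hx hxc, div_sqrt_one_sub_sq_div_sqrt_one_add_sq]
  have hφ_int : IntegrableOn (fun x => w x / √(1 - w x ^ 2)) (Ioo a b) :=
    hu'_int.congr_fun_ae ((ae_restrict_iff' measurableSet_Ioo).2 hu'_ae)
  have hwc : |w c| < 1 :=
    abs_flux_lt_one_of_decay hc hw'_int hw_ftc hw_off hφ_int hw' hsign₁ hdecay
  have hw_abs : ∀ x ∈ Ioo a b, w x ∈ Ioo (-1) 1 := fun x hx => abs_lt.1 <| by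
    rcases eq_or_ne x c with rfl | hxc
    exacts [hwc, hw_off x hx hxc]
  have hφ_cont : ContinuousOn (fun x => w x / √(1 - w x ^ 2)) (Ioo a b) :=
    contDiffOn_div_sqrt_one_sub_sq.continuousOn.comp
      ((continuousOn_of_eq_add_integral hw'_int hw_ftc).mono Ioo_subset_Icc_self) hw_abs
  refine ⟨hwc, fun x hx => hasDerivAt_of_eq_add_integral_of_ae_eq hu'_int hu_ftc hφ_cont hu'_ae hx,
    hφ_cont, fun c₁ d₁ h₁ h₂ h₃ => ?_, ?_⟩
  · exact exists_integrableOn_comp_eq_add_integral hw'_int hw_ftc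
      (contDiffOn_div_sqrt_one_sub_sq.locallyLipschitzOn (convex_Ioo _ _))
      ⟨h₁.le, by linarith⟩ ⟨by linarith, h₃.le⟩ h₂
      fun x hx => hw_abs x ⟨h₁.trans_le hx.1, hx.2.trans_lt h₃⟩
  · filter_upwards [ae_hasDerivAt_of_eq_add_integral hw'_int hw_ftc, hw'] with x hx hw'x hxab
    exact hw'x hxab ▸ hx hxab

/-- **Interior regularity across a sign-change point (Theorem 3.3(h), strong form).**
`u ∈ W^{1,1}(a,b)` is differentiable off `c`, with `u'` locally absolutely continuous on
`(a,c)` and `(c,b)`; the flux `w` is absolutely continuous on `[a,b]` with `w = ψ(u')` off `c`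
and `w' = -f(x,u)` a.e.; `f(·,u(·)) ≥ 0` on `(a,c)` and `≤ 0` on `(c,b)`; and an integral decay
condition holds on the left or on the right of `c`. Then `|w(c)| < 1`, `u` is C¹ on the whole
of `(a,b)` with derivative `ψ⁻¹(w)` locally absolutely continuous, and the prescribed curvature
equation `-(ψ(u'))' = f(x,u)` holds a.e. in `(a,b)`. -/
theorem interior_regularity_sign_change_h
    (a b c : ℝ) (hc : c ∈ Ioo a b) (f : ℝ → ℝ → ℝ) (u u' w w' : ℝ → ℝ)
    -- u ∈ W^{1,1}(a,b)
    (hu_cont : ContinuousOn u (Icc a b))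
    (hu'_int : IntegrableOn u' (Ioo a b))
    (hu_ftc : ∀ x ∈ Icc a b, u x = u a + ∫ t in a..x, u' t)
    -- u is differentiable on (a,b) ∖ {c}
    (hu_deriv : ∀ x ∈ Ioo a b, x ≠ c → HasDerivAt u (u' x) x)
    -- u' is locally absolutely continuous on (a,c) and on (c,b)
    (hlocAC₁ : ∀ c₁ d₁ : ℝ, a < c₁ → c₁ ≤ d₁ → d₁ < c → ∃ V : ℝ → ℝ,
      IntegrableOn V (Icc c₁ d₁) ∧ ∀ x ∈ Icc c₁ d₁, u' x = u' c₁ + ∫ t in c₁..x, V t)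
    (hlocAC₂ : ∀ c₁ d₁ : ℝ, c < c₁ → c₁ ≤ d₁ → d₁ < b → ∃ V : ℝ → ℝ,
      IntegrableOn V (Icc c₁ d₁) ∧ ∀ x ∈ Icc c₁ d₁, u' x = u' c₁ + ∫ t in c₁..x, V t)
    -- the flux w is absolutely continuous on [a,b] with derivative w' ∈ L¹(a,b)
    (hw'_int : IntegrableOn w' (Ioo a b))
    (hw_ftc : ∀ x ∈ Icc a b, w x = w a + ∫ t in a..x, w' t)
    (hw_eq : ∀ x ∈ Ioo a b, x ≠ c → w x = u' x / Real.sqrt (1 + u' x ^ 2))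
    (hw' : ∀ᵐ x ∂volume, x ∈ Ioo a b → w' x = -f x (u x))
    -- sign conditions
    (hsign₁ : ∀ᵐ x ∂volume, x ∈ Ioo a c → 0 ≤ f x (u x))
    (hsign₂ : ∀ᵐ x ∂volume, x ∈ Ioo c b → f x (u x) ≤ 0)
    -- integral decay condition on the left or on the right of c
    (hdecay :
      (∃ δ > (0:ℝ), a ≤ c - δ ∧ ∃ μ : ℝ → ℝ,
        IntegrableOn μ (Ioo (c - δ) c) ∧
        (∀ᵐ x ∂volume, x ∈ Ioo (c - δ) c → f x (u x) ≤ μ x) ∧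
        (∀ x ∈ Ico (c - δ) c, 0 < ∫ t in x..c, μ t) ∧
        ¬ IntegrableOn (fun x => 1 / Real.sqrt (∫ t in x..c, μ t)) (Ioo (c - δ) c)) ∨
      (∃ δ > (0:ℝ), c + δ ≤ b ∧ ∃ ν : ℝ → ℝ,
        IntegrableOn ν (Ioo c (c + δ)) ∧
        (∀ᵐ x ∂volume, x ∈ Ioo c (c + δ) → ν x ≤ f x (u x)) ∧
        (∀ x ∈ Ioc c (c + δ), (∫ t in c..x, ν t) < 0) ∧
        ¬ IntegrableOn (fun x => 1 / Real.sqrt (-(∫ t in c..x, ν t))) (Ioo c (c + δ)))) :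
    |w c| < 1 ∧
    (∀ x ∈ Ioo a b, HasDerivAt u (w x / Real.sqrt (1 - w x ^ 2)) x) ∧
    ContinuousOn (fun x => w x / Real.sqrt (1 - w x ^ 2)) (Ioo a b) ∧
    (∀ c₁ d₁ : ℝ, a < c₁ → c₁ ≤ d₁ → d₁ < b → ∃ V : ℝ → ℝ,
      IntegrableOn V (Icc c₁ d₁) ∧ ∀ x ∈ Icc c₁ d₁,
        w x / Real.sqrt (1 - w x ^ 2) = w c₁ / Real.sqrt (1 - w c₁ ^ 2) + ∫ t in c₁..x, V t) ∧
    (∀ᵐ x ∂volume, x ∈ Ioo a b → HasDerivAt w (-f x (u x)) x) :=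
  interior_regularity_sign_change_h_general a b c hc f u u' w w' hu'_int hu_ftc hw'_int hw_ftc hw_eq
    hw' hsign₁ hdecay
end

section
/- Energy estimate against an absolutely continuous comparison potential (step in the proof of Theorem 2.1). Let ε > 0 and let G : [0, ε] → ℝ be absolutely continuous with G(0) = 0. Let t₀ ∈ ℝ, δ > 0, and let v : [t₀, t₀+δ] → ℝ be absolutely continuous and strictly increasing with v(t₀) = 0 and 0 < v(t) ≤ ε for t ∈ (t₀, t₀+δ]. Assume v' is absolutely continuous on [t₀, t₀+δ] with v'(t₀) = 0, v'(t) > 0 for t ∈ (t₀, t₀+δ], and v''(s) ≤ G'(v(s)) for almost every s ∈ [t₀, t₀+δ]. Then (1/2)·(v'(t))² ≤ G(v(t)) for every t ∈ [t₀, t₀+δ]; in particular |v'(t)| ≤ √(2 G(v(t))) on [t₀, t₀+δ]. -/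
open Set Filter MeasureTheory Topology

/-!
Multiplying `v'' ≤ G'(v)` by `v' ≥ 0` and integrating over `[t₀, t]` gives
`∫ v'' v' ≤ ∫ v' G'(v)`. The left side is `(v'(t)² - v'(t₀)²) / 2`, because `v'` is the
absolutely continuous primitive of `v''`; the right side is `G(v(t)) - G(v(t₀))` by the change of
variables `y = v(s)`, valid for the nondecreasing differentiable `v` and integrable `G'`.
-/

theorem sq_sub_sq_eq_two_mul_integral_mul_primitive {g : ℝ → ℝ} {a b : ℝ}
    (hg : IntervalIntegrable g volume a b) (c : ℝ) :
    (c + ∫ x in a..b, g x) ^ 2 - c ^ 2 = 2 * ∫ x in a..b, g x * (c + ∫ r in a..x, g r) := by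
  set F : ℝ → ℝ := fun x ↦ c + ∫ r in a..x, g r
  have hF : AbsolutelyContinuousOnInterval F a b :=
    (LipschitzWith.const c).lipschitzOnWith.absolutelyContinuousOnInterval.add
      (hg.absolutelyContinuousOnInterval_intervalIntegral left_mem_uIcc)
  have hderiv : ∀ᵐ x, x ∈ uIoc a b → deriv F x * F x + F x * deriv F x = 2 * (g x * F x) := by
    filter_upwards [hg.ae_hasDerivAt_integral] with x hx hxab
    rw [((hx (uIoc_subset_uIcc hxab) a left_mem_uIcc).const_add c).deriv]
    ring
  calc (c + ∫ x in a..b, g x) ^ 2 - c ^ 2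
    _ = F b * F b - F a * F a := by
      simp only [F, intervalIntegral.integral_same, add_zero]; ring
    _ = ∫ x in a..b, deriv F x * F x + F x * deriv F x := (hF.integral_deriv_mul_eq_sub hF).symm
    _ = 2 * ∫ x in a..b, g x * F x := by
      rw [intervalIntegral.integral_congr_ae hderiv, intervalIntegral.integral_const_mul]

theorem sq_sub_sq_le_two_mul_integral_of_ae_le_comp {v w w' G' : ℝ → ℝ} {a b : ℝ} (hab : a ≤ b)
    (hv : ContinuousOn v (Icc a b)) (hvw : ∀ x ∈ Ioo a b, HasDerivAt v (w x) x)
    (hw_nonneg : ∀ x ∈ Ioo a b, 0 ≤ w x)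
    (hw : ∀ x ∈ Icc a b, w x = w a + ∫ r in a..x, w' r) (hw' : IntegrableOn w' (Icc a b))
    (hG' : IntegrableOn G' (Icc (v a) (v b)))
    (hcomp : ∀ᵐ x, x ∈ Icc a b → w' x ≤ G' (v x)) :
    w b ^ 2 - w a ^ 2 ≤ 2 * ∫ y in Icc (v a) (v b), G' y := by
  have henergy : w b ^ 2 - w a ^ 2 = 2 * ∫ x in Ioo a b, w' x * w x := by
    rw [hw b (right_mem_Icc.2 hab), sq_sub_sq_eq_two_mul_integral_mul_primitive
      ((intervalIntegrable_iff_integrableOn_Icc_of_le hab).2 hw'),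
      intervalIntegral.integral_of_le hab, ← integral_Ioc_eq_integral_Ioo]
    congr 1
    exact setIntegral_congr_fun measurableSet_Ioc fun x hx ↦ by rw [hw x (Ioc_subset_Icc_self hx)]
  have hw_cont : ContinuousOn w (Icc a b) := by
    have hprim := intervalIntegral.continuousOn_primitive_interval (a := a) (b := b)
      (by rwa [uIcc_of_le hab])
    rw [uIcc_of_le hab] at hprim
    exact (hprim.const_add (w a)).congr hw
  have hint_left : IntegrableOn (fun x ↦ w' x * w x) (Ioo a b) :=
    (hw'.mul_continuousOn hw_cont isCompact_Icc).mono_set Ioo_subset_Icc_self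
  have hint_right : IntegrableOn (fun x ↦ w x * G' (v x)) (Ioo a b) := by
    have := (integrableOn_Icc_deriv_smul_iff_of_deriv_nonneg hv hvw hw_nonneg hab).2 hG'
    exact this.mono_set Ioo_subset_Icc_self
  have hle : ∫ x in Ioo a b, w' x * w x ≤ ∫ x in Ioo a b, w x * G' (v x) := by
    refine setIntegral_mono_ae_restrict hint_left hint_right ?_
    filter_upwards [ae_restrict_mem measurableSet_Ioo, ae_restrict_of_ae hcomp] with x hx hcx
    rw [mul_comm]
    exact mul_le_mul_of_nonneg_left (hcx (Ioo_subset_Icc_self hx)) (hw_nonneg x hx)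
  have hchange : ∫ x in Ioo a b, w x * G' (v x) = ∫ y in Icc (v a) (v b), G' y := by
    rw [← integral_Icc_eq_integral_Ioo]
    exact integral_Icc_deriv_smul_of_deriv_nonneg hv hvw hw_nonneg hab
  rw [henergy, ← hchange]
  gcongr

theorem energy_estimate_comparison_potential_general
    (ε : ℝ) (hε : 0 < ε) (G G' : ℝ → ℝ)
    -- G absolutely continuous on [0,ε] with a.e. derivative G' and G(0) = 0
    (hG'_int : IntegrableOn G' (Icc 0 ε))
    (hG_ftc : ∀ s ∈ Icc (0:ℝ) ε, G s = G 0 + ∫ r in (0:ℝ)..s, G' r)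
    (hG0 : G 0 = 0)
    (t₀ δ : ℝ) (v v' v'' : ℝ → ℝ)
    -- v absolutely continuous and strictly increasing on [t₀,t₀+δ], with derivative v'
    (hv_deriv : ∀ t ∈ Icc t₀ (t₀ + δ), HasDerivWithinAt v (v' t) (Icc t₀ (t₀ + δ)) t)
    (hv0 : v t₀ = 0)
    (hv_range : ∀ t ∈ Ioc t₀ (t₀ + δ), 0 < v t ∧ v t ≤ ε)
    -- v' absolutely continuous on [t₀,t₀+δ] with a.e. derivative v''
    (hv''_int : IntegrableOn v'' (Icc t₀ (t₀ + δ)))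
    (hv'_ftc : ∀ t ∈ Icc t₀ (t₀ + δ), v' t = v' t₀ + ∫ r in t₀..t, v'' r)
    (hv'0 : v' t₀ = 0)
    (hv'_pos : ∀ t ∈ Ioc t₀ (t₀ + δ), 0 < v' t)
    -- the comparison inequality a.e.
    (hcomp : ∀ᵐ s ∂volume, s ∈ Icc t₀ (t₀ + δ) → v'' s ≤ G' (v s)) :
    ∀ t ∈ Icc t₀ (t₀ + δ),
      (1/2) * (v' t) ^ 2 ≤ G (v t) ∧ |v' t| ≤ Real.sqrt (2 * G (v t)) := by
  intro t ht
  have hsub : Icc t₀ t ⊆ Icc t₀ (t₀ + δ) := Icc_subset_Icc_right ht.2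
  have hvt : v t ∈ Icc 0 ε := by
    rcases ht.1.eq_or_lt with rfl | h
    · exact ⟨hv0.ge, hv0 ▸ hε.le⟩
    · exact ⟨(hv_range t ⟨h, ht.2⟩).1.le, (hv_range t ⟨h, ht.2⟩).2⟩
  have hG_eq : G (v t) = ∫ y in Icc (v t₀) (v t), G' y := by
    rw [hG_ftc _ hvt, hG0, zero_add, hv0, intervalIntegral.integral_of_le hvt.1,
      integral_Icc_eq_integral_Ioc]
  have hineq := sq_sub_sq_le_two_mul_integral_of_ae_le_comp ht.1
    (fun x hx ↦ (hv_deriv x (hsub hx)).continuousWithinAt.mono hsub)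
    (fun x hx ↦ (hv_deriv x (hsub (Ioo_subset_Icc_self hx))).hasDerivAt
      (Icc_mem_nhds hx.1 (hx.2.trans_le ht.2)))
    (fun x hx ↦ (hv'_pos x ⟨hx.1, hx.2.le.trans ht.2⟩).le)
    (fun x hx ↦ hv'_ftc x (hsub hx)) (hv''_int.mono_set hsub)
    (hG'_int.mono_set (by rw [hv0]; exact Icc_subset_Icc_right hvt.2))
    (hcomp.mono fun x hx hxt ↦ hx (hsub hxt))
  rw [hv'0, ← hG_eq] at hineq
  have hsq : v' t ^ 2 ≤ 2 * G (v t) := by linarith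
  exact ⟨by linarith, Real.abs_le_sqrt hsq⟩

/-- **Energy estimate against an absolutely continuous comparison potential (step in the proof
of Theorem 2.1).** If `G` is absolutely continuous on `[0,ε]` with `G(0) = 0`, `v` is absolutely
continuous and strictly increasing on `[t₀,t₀+δ]` with `v(t₀) = 0` and `0 < v ≤ ε` on
`(t₀,t₀+δ]`, `v'` is absolutely continuous with `v'(t₀) = 0`, `v' > 0` on `(t₀,t₀+δ]` and
`v'' ≤ G'(v)` a.e., then `(1/2)(v')² ≤ G(v)` and `|v'| ≤ √(2 G(v))` on `[t₀,t₀+δ]`. -/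
theorem energy_estimate_comparison_potential
    (ε : ℝ) (hε : 0 < ε) (G G' : ℝ → ℝ)
    -- G absolutely continuous on [0,ε] with a.e. derivative G' and G(0) = 0
    (hG'_int : IntegrableOn G' (Icc 0 ε))
    (hG_ftc : ∀ s ∈ Icc (0:ℝ) ε, G s = G 0 + ∫ r in (0:ℝ)..s, G' r)
    (hG0 : G 0 = 0)
    (t₀ δ : ℝ) (hδ : 0 < δ) (v v' v'' : ℝ → ℝ)
    -- v absolutely continuous and strictly increasing on [t₀,t₀+δ], with derivative v'
    (hv_deriv : ∀ t ∈ Icc t₀ (t₀ + δ), HasDerivWithinAt v (v' t) (Icc t₀ (t₀ + δ)) t)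
    (hv_mono : StrictMonoOn v (Icc t₀ (t₀ + δ)))
    (hv0 : v t₀ = 0)
    (hv_range : ∀ t ∈ Ioc t₀ (t₀ + δ), 0 < v t ∧ v t ≤ ε)
    -- v' absolutely continuous on [t₀,t₀+δ] with a.e. derivative v''
    (hv''_int : IntegrableOn v'' (Icc t₀ (t₀ + δ)))
    (hv'_ftc : ∀ t ∈ Icc t₀ (t₀ + δ), v' t = v' t₀ + ∫ r in t₀..t, v'' r)
    (hv'0 : v' t₀ = 0)
    (hv'_pos : ∀ t ∈ Ioc t₀ (t₀ + δ), 0 < v' t)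
    -- the comparison inequality a.e.
    (hcomp : ∀ᵐ s ∂volume, s ∈ Icc t₀ (t₀ + δ) → v'' s ≤ G' (v s)) :
    ∀ t ∈ Icc t₀ (t₀ + δ),
      (1/2) * (v' t) ^ 2 ≤ G (v t) ∧ |v' t| ≤ Real.sqrt (2 * G (v t)) :=
  energy_estimate_comparison_potential_general ε hε G G' hG'_int hG_ftc hG0 t₀ δ v v' v'' hv_deriv
    hv0 hv_range hv''_int hv'_ftc hv'0 hv'_pos hcomp
end
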